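/- Let L be a language over Σ and let ∼ be the equivalence on well-matched strings defined by s1 ∼ s2 iff for all strings u, v, u s1 v ∈ L ⟺ u s2 v ∈ L. If L is a visibly pushdown language (under a given tagging), then ∼ has finitely many equivalence classes; conversely if ∼ has finitely many equivalence classes on well-matched strings then L is a visibly pushdown language. -/
import Mathlib


namespace VStar

inductive Kind : Type
  | plain | call | ret
deriving DecidableEq

variable {α : Type}

/-- Well-matched strings with respect to a tagging. -/
inductive WellMatched (t : α → Kind) : List α → Prop
  | nil : WellMatched t []
  | plain {c : α} {s : List α} : t c = Kind.plain → WellMatched t s →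
      WellMatched t (c :: s)
  | nest {a b : α} {s1 s2 : List α} : t a = Kind.call → t b = Kind.ret →
      WellMatched t s1 → WellMatched t s2 →
      WellMatched t (a :: s1 ++ b :: s2)

/-- Well-matched visibly pushdown grammars. -/
structure VPG (α N : Type) (t : α → Kind) where
  start : N
  peps : N → Prop
  pplain : N → α → N → Prop
  pmatch : N → α → N → α → N → Prop
  plain_ok : ∀ {L c L1}, pplain L c L1 → t c = Kind.plain
  match_ok : ∀ {L a L1 b L2}, pmatch L a L1 b L2 → t a = Kind.call ∧ t b = Kind.ret

inductive VPG.Derives {α N : Type} {t : α → Kind} (G : VPG α N t) : N → List α → Prop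
  | eps {L} : G.peps L → G.Derives L []
  | plain {L c L1 s} : G.pplain L c L1 → G.Derives L1 s → G.Derives L (c :: s)
  | nest {L a L1 b L2 s1 s2} : G.pmatch L a L1 b L2 →
      G.Derives L1 s1 → G.Derives L2 s2 → G.Derives L (a :: s1 ++ b :: s2)

def VPG.lang {α N : Type} {t : α → Kind} (G : VPG α N t) : Set (List α) :=
  {s | G.Derives G.start s}

/-- A language is a visibly pushdown language (for tagging `t`). -/
def IsVPL (t : α → Kind) (L : Set (List α)) : Prop :=
  ∃ (n : ℕ) (G : VPG α (Fin n) t), L = G.lang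

/-- `lpow x k` is the concatenation of `k` copies of `x`. -/
def lpow (x : List α) (k : ℕ) : List α := (List.replicate k x).flatten

/-- A nesting pattern of `s = u ++ x ++ z ++ y ++ v` with respect to language `L`. -/
def NestingPattern (L : Set (List α)) (u x z y v : List α) : Prop :=
  x ≠ [] ∧ y ≠ [] ∧
    (∀ k, 1 ≤ k → u ++ lpow x k ++ z ++ lpow y k ++ v ∈ L) ∧
    (∀ k j, k ≠ j → u ++ lpow x k ++ z ++ lpow y j ++ v ∉ L)

/-- `x` contains an occurrence of a call symbol with no matching return inside `x`. -/
def UnmatchedCallIn (t : α → Kind) (x : List α) : Prop :=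
  ∃ x1 a x2, x = x1 ++ a :: x2 ∧ t a = Kind.call ∧
    ¬ ∃ w b w', x2 = w ++ b :: w' ∧ t b = Kind.ret ∧ WellMatched t w

/-- `y` contains an occurrence of a return symbol with no matching call inside `y`. -/
def UnmatchedRetIn (t : α → Kind) (y : List α) : Prop :=
  ∃ y1 b y2, y = y1 ++ b :: y2 ∧ t b = Kind.ret ∧
    ¬ ∃ w a w', y1 = w ++ a :: w' ∧ t a = Kind.call ∧ WellMatched t w'

/-- A tagging is compatible with a nesting pattern `(x, y)`. -/
def PatternCompatible (t : α → Kind) (x y : List α) : Prop :=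
  UnmatchedCallIn t x ∧ UnmatchedRetIn t y

/-- Compatibility of a tagging with a set `S` of seed strings (patterns w.r.t. `L`). -/
def CompatibleWith (t : α → Kind) (L S : Set (List α)) : Prop :=
  (∀ s ∈ S, WellMatched t s) ∧
  ∀ u x z y v, (u ++ x ++ z ++ y ++ v) ∈ S → NestingPattern L u x z y v →
    PatternCompatible t x y

/-- Compatibility of a tagging with the whole language. -/
def Compatible (t : α → Kind) (L : Set (List α)) : Prop := CompatibleWith t L L

/-- Syntactic congruence with respect to `L`. -/
def SynCongr (L : Set (List α)) (s1 s2 : List α) : Prop :=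
  ∀ u v, u ++ s1 ++ v ∈ L ↔ u ++ s2 ++ v ∈ L

end VStar

namespace VPLAux

open VStar

variable {α : Type} {t : α → Kind}

/-! ### Balance counting -/

/-- The balance (number of calls minus number of returns) of a string. -/
def bal (t : α → Kind) : List α → ℤ
  | [] => 0
  | c :: s => (match t c with | Kind.call => 1 | Kind.ret => -1 | Kind.plain => 0) + bal t s

lemma bal_nil : bal t [] = 0 := rfl

lemma bal_cons (c : α) (s : List α) :
    bal t (c :: s) =
      (match t c with | Kind.call => 1 | Kind.ret => -1 | Kind.plain => 0) + bal t s := rfl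

lemma bal_append (l1 l2 : List α) : bal t (l1 ++ l2) = bal t l1 + bal t l2 := by
  induction l1 with
  | nil => simp [bal]
  | cons c s ih => simp [bal_cons, ih]; ring

lemma bal_single_ret {b : α} (h : t b = Kind.ret) : bal t [b] = -1 := by
  simp [bal, h]

lemma wm_bal_zero {s : List α} (h : WellMatched t s) : bal t s = 0 := by
  induction h with
  | nil => rfl
  | plain hc _ ih => simp [bal_cons, hc, ih]
  | nest ha hb hw1 hw2 ih1 ih2 =>
      rename_i a b s1 s2
      have e : (a :: s1 ++ b :: s2) = [a] ++ s1 ++ ([b] ++ s2) := by simp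
      rw [e, bal_append, bal_append, bal_append]
      simp [bal, ha, hb, ih1, ih2]

lemma wm_bal_prefix {s : List α} (h : WellMatched t s) :
    ∀ p q, s = p ++ q → 0 ≤ bal t p := by
  induction h with
  | nil =>
      intro p q e
      have : p = [] := by cases p with
        | nil => rfl
        | cons c p' => simp at e
      simp [this, bal]
  | plain hc _ ih =>
      intro p q e
      cases p with
      | nil => simp [bal]
      | cons d p' =>
          rw [List.cons_append] at e
          injection e with e1 e2
          subst e1
          have := ih p' q e2
          simp only [bal_cons, hc]
          omega
  | nest ha hb h1 h2 ih1 ih2 =>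
      rename_i a b s1 s2
      intro p q e
      cases p with
      | nil => simp [bal]
      | cons d p' =>
          rw [List.cons_append] at e
          injection e with e1 e2
          subst e1
          simp only [bal_cons, ha]
          rcases List.append_eq_append_iff.mp e2 with ⟨x, hx1, hx2⟩ | ⟨x, hx1, hx2⟩
          · -- p' = s1 ++ x, b :: s2 = x ++ q
            cases x with
            | nil =>
                simp only [List.append_nil] at hx1
                subst hx1
                rw [wm_bal_zero h1]; omega
            | cons e' x' =>
                rw [List.cons_append] at hx2
                injection hx2 with e3 e4
                subst e3 hx1
                rw [bal_append, wm_bal_zero h1]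
                have e5 : bal t (b :: x') = -1 + bal t x' := by
                  simp [bal_cons, hb]
                have := ih2 x' q e4
                omega
          · -- s1 = p' ++ x
            have := ih1 p' x hx1
            omega

lemma not_wm_mid_ret {s x y : List α} {b : α} (h : WellMatched t s)
    (e : s = x ++ b :: y) (hb : t b = Kind.ret) (hx : bal t x ≤ 0) : False := by
  have := wm_bal_prefix h (x ++ [b]) y (by simp [e])
  rw [bal_append, bal_single_ret hb] at this
  omega

lemma wm_head_not_ret {s s' : List α} {c : α} (h : WellMatched t s)
    (e : s = c :: s') (hc : t c = Kind.ret) : False :=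
  not_wm_mid_ret (x := []) (y := s') h (by simpa using e) hc (le_of_eq bal_nil)

lemma wm_ret_split_unique {w1 w2 s1 s2 : List α} {b' b : α}
    (hw : WellMatched t w1) (hs : WellMatched t s1)
    (hb' : t b' = Kind.ret) (hb : t b = Kind.ret)
    (e : w1 ++ b' :: w2 = s1 ++ b :: s2) :
    w1 = s1 ∧ b' = b ∧ w2 = s2 := by
  rcases List.append_eq_append_iff.mp e with ⟨x, hx1, hx2⟩ | ⟨x, hx1, hx2⟩
  · -- s1 = w1 ++ x, b' :: w2 = x ++ b :: s2
    cases x with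
    | nil =>
        simp only [List.append_nil] at hx1
        simp only [List.nil_append] at hx2
        injection hx2 with e1 e2
        exact ⟨hx1.symm, e1, e2⟩
    | cons d x' =>
        rw [List.cons_append] at hx2
        injection hx2 with e1 e2
        subst e1 hx1
        exact (not_wm_mid_ret hs rfl hb' (wm_bal_zero hw).le).elim
  · -- w1 = s1 ++ x, b :: s2 = x ++ b' :: w2
    cases x with
    | nil =>
        simp only [List.append_nil] at hx1
        simp only [List.nil_append] at hx2
        injection hx2 with e1 e2
        exact ⟨hx1, e1.symm, e2.symm⟩
    | cons d x' =>
        rw [List.cons_append] at hx2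
        injection hx2 with e1 e2
        subst e1 hx1
        exact (not_wm_mid_ret hw rfl hb (wm_bal_zero hs).le).elim

/-! ### Derivations are well-matched -/

lemma derives_wm {N : Type} {G : VPG α N t} {A : N} {w : List α}
    (h : G.Derives A w) : WellMatched t w := by
  induction h with
  | eps _ => exact .nil
  | plain hp _ ih => exact .plain (G.plain_ok hp) ih
  | nest hm _ _ ih1 ih2 => exact .nest (G.match_ok hm).1 (G.match_ok hm).2 ih1 ih2

/-! ### Partial derivations -/

/-- Partial derivation: from `A`, consuming a well-matched string `w`, reach `B`. -/
inductive PDer {N : Type} (G : VPG α N t) : N → List α → N → Prop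
  | refl {A} : PDer G A [] A
  | plain {A c A1 B s} : G.pplain A c A1 → PDer G A1 s B → PDer G A (c :: s) B
  | nest {A a A1 b A2 B s1 s2} : G.pmatch A a A1 b A2 → G.Derives A1 s1 →
      PDer G A2 s2 B → PDer G A (a :: s1 ++ b :: s2) B

lemma PDer.comp {N : Type} {G : VPG α N t} {A B C : N} {w w' : List α}
    (h1 : PDer G A w B) (h2 : PDer G B w' C) : PDer G A (w ++ w') C := by
  induction h1 with
  | refl => exact h2
  | plain hp _ ih => exact .plain hp (ih h2)
  | nest hm hd _ ih =>
      have := PDer.nest hm hd (ih h2)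
      simpa using this

lemma PDer.derives {N : Type} {G : VPG α N t} {A B : N} {w v : List α}
    (h1 : PDer G A w B) (h2 : G.Derives B v) : G.Derives A (w ++ v) := by
  induction h1 with
  | refl => exact h2
  | plain hp _ ih => exact .plain hp (ih h2)
  | nest hm hd _ ih =>
      have := VPG.Derives.nest hm hd (ih h2)
      simpa using this

/-- Splitting off a well-matched prefix of a derivation. -/
lemma split_wm_prefix {N : Type} {G : VPG α N t} :
    ∀ {A w}, G.Derives A w → ∀ s v, w = s ++ v → WellMatched t s →
      ∃ B, PDer G A s B ∧ G.Derives B v := by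
  intro A w h
  induction h with
  | eps he =>
      intro s v e hs
      have hsn : s = [] := by cases s <;> simp_all
      have hvn : v = [] := by subst hsn; simpa using e
      subst hsn hvn
      exact ⟨_, .refl, .eps he⟩
  | plain hp hd ih =>
      rename_i A' c A1 s0
      intro s v e hs
      cases s with
      | nil =>
          refine ⟨A', .refl, ?_⟩
          simp only [List.nil_append] at e
          exact e ▸ VPG.Derives.plain hp hd
      | cons d s' =>
          rw [List.cons_append] at e
          have hd1 : c = d := (List.head_eq_of_cons_eq e)
          have e2 : s0 = s' ++ v := (List.tail_eq_of_cons_eq e)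
          subst hd1
          cases hs with
          | plain hc hs' =>
              obtain ⟨B, pd, hv⟩ := ih s' v e2 hs'
              exact ⟨B, .plain hp pd, hv⟩
          | nest ha _ _ _ =>
              exact absurd (G.plain_ok hp) (by rw [ha]; intro h; cases h)
  | nest hm hd1 hd2 ih1 ih2 =>
      rename_i A' a A1 b A2 t1 t2
      intro s v e hs
      cases s with
      | nil =>
          refine ⟨A', .refl, ?_⟩
          simp only [List.nil_append] at e
          exact e ▸ VPG.Derives.nest hm hd1 hd2
      | cons d s' =>
          rw [List.cons_append] at e
          have hda : a = d := (List.head_eq_of_cons_eq e)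
          have e2 : t1 ++ b :: t2 = s' ++ v := (List.tail_eq_of_cons_eq e)
          subst hda
          cases hs with
          | plain hc _ =>
              exact absurd (G.match_ok hm).1 (by rw [hc]; intro h; cases h)
          | nest ha2 hb2 hs1 hs2 =>
              rename_i b2 s1'' s2''
              simp only [List.append_eq] at e2 ⊢
              rw [List.append_assoc, List.cons_append] at e2
              obtain ⟨e3, e4, e5⟩ :=
                wm_ret_split_unique (derives_wm hd1) hs1 (G.match_ok hm).2 hb2 e2
              obtain ⟨B, pd, hv⟩ := ih2 s2'' v e5 hs2
              subst e3 e4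
              exact ⟨B, .nest hm hd1 pd, hv⟩

/-! ### The substitution lemma -/

lemma subst0 {N : Type} {G : VPG α N t} {s1 s2 : List α} (hs1 : WellMatched t s1)
    (hp : ∀ B C, PDer G B s1 C → PDer G B s2 C)
    {A : N} {v : List α} (h : G.Derives A (s1 ++ v)) : G.Derives A (s2 ++ v) := by
  obtain ⟨B, pd, hv⟩ := split_wm_prefix h s1 v rfl hs1
  exact (hp _ _ pd).derives hv

lemma substitution {N : Type} {G : VPG α N t} {s1 s2 : List α} (hs1 : WellMatched t s1)
    (hp : ∀ B C, PDer G B s1 C → PDer G B s2 C) :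
    ∀ {A w}, G.Derives A w → ∀ u v, w = u ++ s1 ++ v → G.Derives A (u ++ s2 ++ v) := by
  intro A w h
  induction h with
  | eps he =>
      intro u v e
      cases u with
      | nil =>
          simp only [List.nil_append] at e ⊢
          refine subst0 hs1 hp ?_
          rw [← e]
          exact .eps he
      | cons c u' => simp at e
  | plain hpl hd ih =>
      rename_i A' c A1 s0
      intro u v e
      cases u with
      | nil =>
          simp only [List.nil_append] at e ⊢
          refine subst0 hs1 hp ?_
          rw [← e]
          exact .plain hpl hd
      | cons d u' =>
          rw [List.cons_append, List.cons_append] at e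
          have hd1 : c = d := (List.head_eq_of_cons_eq e)
          have e2 : s0 = u' ++ s1 ++ v := (List.tail_eq_of_cons_eq e)
          subst hd1
          have := VPG.Derives.plain hpl (ih u' v e2)
          simpa using this
  | nest hm hd1 hd2 ih1 ih2 =>
      rename_i A' a A1 b A2 t1 t2
      intro u v e
      cases u with
      | nil =>
          simp only [List.nil_append] at e ⊢
          refine subst0 hs1 hp ?_
          rw [← e]
          exact .nest hm hd1 hd2
      | cons d u' =>
          rw [List.cons_append, List.cons_append] at e
          have hda : a = d := (List.head_eq_of_cons_eq e)
          have e2 : t1 ++ b :: t2 = u' ++ (s1 ++ v) :=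
            List.append_assoc _ _ _ ▸ (List.tail_eq_of_cons_eq e)
          subst hda
          have hb : t b = Kind.ret := (G.match_ok hm).2
          rcases List.append_eq_append_iff.mp e2.symm with ⟨x, hx1, hx2⟩ | ⟨x, hx1, hx2⟩
          · -- t1 = u' ++ x, s1 ++ v = x ++ b :: t2
            rcases List.append_eq_append_iff.mp hx2 with ⟨y, hy1, hy2⟩ | ⟨y, hy1, hy2⟩
            · -- x = s1 ++ y, v = y ++ b :: t2
              subst hy1 hy2
              have e3 : t1 = u' ++ s1 ++ y := by rw [hx1, List.append_assoc]
              have := VPG.Derives.nest hm (ih1 u' y e3) hd2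
              simpa [List.append_assoc] using this
            · -- s1 = x ++ y, b :: t2 = y ++ v
              cases y with
              | nil =>
                  simp only [List.append_nil] at hy1
                  simp only [List.nil_append] at hy2
                  subst hy1
                  subst hy2
                  have e3 : t1 = u' ++ s1 ++ [] := by simp [hx1]
                  have h7 := VPG.Derives.nest hm (ih1 u' [] e3) hd2
                  simpa [List.append_assoc] using h7
              | cons d' y' =>
                  rw [List.cons_append] at hy2
                  injection hy2 with e1 _
                  subst e1 hy1
                  -- s1 = x ++ b :: y', x is a suffix of well-matched t1
                  have hxle : bal t x ≤ 0 := by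
                    have h1 : bal t t1 = 0 := wm_bal_zero (derives_wm hd1)
                    have h2 : 0 ≤ bal t u' :=
                      wm_bal_prefix (derives_wm hd1) u' x hx1
                    have h3 : bal t t1 = bal t u' + bal t x := by
                      rw [hx1, bal_append]
                    omega
                  exact (not_wm_mid_ret hs1 rfl hb hxle).elim
          · -- u' = t1 ++ x, b :: t2 = x ++ (s1 ++ v)
            cases x with
            | nil =>
                simp only [List.append_nil] at hx1
                simp only [List.nil_append] at hx2
                cases s1 with
                | nil =>
                    -- s1 = [] sitting at the b boundary: insert s2 after t1
                    simp only [List.nil_append] at hx2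
                    obtain ⟨C, pd, hv⟩ :=
                      split_wm_prefix hd1 t1 [] (by simp) (derives_wm hd1)
                    have pd2 : PDer G A1 (t1 ++ s2) C := pd.comp (hp C C .refl)
                    have hd1' : G.Derives A1 (t1 ++ s2) := by
                      simpa using pd2.derives hv
                    subst hx1
                    subst hx2
                    have h7 := VPG.Derives.nest hm hd1' hd2
                    simpa [List.append_assoc] using h7
                | cons c0 s1'' =>
                    rw [List.cons_append] at hx2
                    injection hx2 with e1 _
                    exact (wm_head_not_ret hs1 rfl (e1 ▸ hb)).elim
            | cons d' x' =>
                rw [List.cons_append] at hx2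
                injection hx2 with e1 e4
                subst e1 hx1
                have e3 : t2 = x' ++ s1 ++ v := by rw [e4, List.append_assoc]
                have h7 := VPG.Derives.nest hm hd1 (ih2 x' v e3)
                simpa [List.append_assoc] using h7

/-! ### Profiles -/

/-- The profile of a string: the set of pairs of nonterminals related by a
partial derivation over it. -/
noncomputable def profile {n : ℕ} (G : VPG α (Fin n) t) (s : List α) :
    Finset (Fin n × Fin n) :=
  @Finset.filter _ (fun p => PDer G p.1 s p.2) (Classical.decPred _) Finset.univ

lemma mem_profile {n : ℕ} {G : VPG α (Fin n) t} {s : List α} {p : Fin n × Fin n} :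
    p ∈ profile G s ↔ PDer G p.1 s p.2 := by
  simp [profile, Finset.mem_filter]

lemma syncongr_of_profile_eq {n : ℕ} {G : VPG α (Fin n) t} {s r : List α}
    (hs : WellMatched t s) (hr : WellMatched t r)
    (h : profile G s = profile G r) : SynCongr G.lang s r := by
  have key : ∀ {x y : List α}, profile G x = profile G y →
      ∀ B C, PDer G B x C → PDer G B y C := by
    intro x y hxy B C pd
    have hmem : ((B, C) : Fin n × Fin n) ∈ profile G x := mem_profile.mpr pd
    rw [hxy] at hmem
    exact mem_profile.mp hmem
  intro u v
  constructor
  · intro hm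
    exact substitution hs (key h) hm u v rfl
  · intro hm
    exact substitution hr (key h.symm) hm u v rfl

/-! ### Forward direction -/

lemma forward_dir {n : ℕ} (G : VPG α (Fin n) t) :
    ∃ R : Finset (List α), ∀ s, WellMatched t s →
      ∃ r ∈ R, WellMatched t r ∧ SynCongr G.lang s r := by
  classical
  set rep : Finset (Fin n × Fin n) → List α := fun P =>
    if h : ∃ s, WellMatched t s ∧ profile G s = P then h.choose else [] with hrep
  refine ⟨Finset.univ.image rep, ?_⟩
  intro s hs
  have hex : ∃ s', WellMatched t s' ∧ profile G s' = profile G s := ⟨s, hs, rfl⟩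
  have hval : rep (profile G s) = hex.choose := by simp [hrep, dif_pos hex]
  obtain ⟨hwm', hprof'⟩ := hex.choose_spec
  refine ⟨rep (profile G s), Finset.mem_image.mpr ⟨_, Finset.mem_univ _, rfl⟩, ?_, ?_⟩
  · rw [hval]; exact hwm'
  · rw [hval]
    exact syncongr_of_profile_eq hs hwm' hprof'.symm

/-! ### Syntactic congruence basics -/

lemma _root_.VStar.SynCongr.rfl' {L : Set (List α)} {s : List α} : SynCongr L s s :=
  fun _ _ => Iff.rfl

lemma _root_.VStar.SynCongr.symm' {L : Set (List α)} {s r : List α} (h : SynCongr L s r) :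
    SynCongr L r s := fun u v => (h u v).symm

lemma _root_.VStar.SynCongr.trans' {L : Set (List α)} {s r q : List α}
    (h1 : SynCongr L s r) (h2 : SynCongr L r q) : SynCongr L s q :=
  fun u v => (h1 u v).trans (h2 u v)

lemma _root_.VStar.SynCongr.context {L : Set (List α)} {s r : List α} (h : SynCongr L s r)
    (x y : List α) : SynCongr L (x ++ s ++ y) (x ++ r ++ y) := by
  intro u v
  have := h (u ++ x) (y ++ v)
  simpa [List.append_assoc] using this

lemma _root_.VStar.SynCongr.mem_iff {L : Set (List α)} {s r : List α} (h : SynCongr L s r) :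
    s ∈ L ↔ r ∈ L := by
  have := h [] []
  simpa using this

/-! ### The grammar built from representatives -/

/-- The grammar whose nonterminals are representatives of congruence classes,
plus a fresh start symbol `none`. -/
def Gc (t : α → Kind) (L : Set (List α)) (R : Finset (List α)) :
    VPG α (Option {x : List α // x ∈ R}) t where
  start := none
  peps A :=
    match A with
    | none => [] ∈ L
    | some r => SynCongr L [] r.val
  pplain A c B :=
    t c = Kind.plain ∧
      match A, B with
      | none, some r' => (c :: r'.val) ∈ L
      | some r, some r' => SynCongr L (c :: r'.val) r.val
      | _, none => False
  pmatch A a B1 b B2 :=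
    t a = Kind.call ∧ t b = Kind.ret ∧
      match A, B1, B2 with
      | none, some r1, some r2 => (a :: r1.val ++ b :: r2.val) ∈ L
      | some r, some r1, some r2 => SynCongr L (a :: r1.val ++ b :: r2.val) r.val
      | _, _, _ => False
  plain_ok h := h.1
  match_ok h := ⟨h.1, h.2.1⟩

lemma Gc_sound {L : Set (List α)} {R : Finset (List α)} :
    ∀ {A w}, (Gc t L R).Derives A w →
      match A with
      | none => w ∈ L
      | some r => WellMatched t w ∧ SynCongr L w r.val := by
  intro A w h
  induction h with
  | eps he =>
      rename_i A'
      cases A' with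
      | none => exact he
      | some r => exact ⟨.nil, (he : SynCongr L [] r.val)⟩
  | plain hpl hd ih =>
      rename_i A' c B s
      cases B with
      | none =>
          cases A' with
          | none => exact hpl.2.elim
          | some r => exact hpl.2.elim
      | some r' =>
          cases A' with
          | none =>
              have hc : SynCongr L (c :: s) (c :: r'.val) := by
                have := (ih.2 : SynCongr L s r'.val).context [c] []
                simpa using this
              exact hc.mem_iff.mpr hpl.2
          | some r =>
              refine ⟨.plain hpl.1 ih.1, ?_⟩
              have hc : SynCongr L (c :: s) (c :: r'.val) := by
                have := (ih.2 : SynCongr L s r'.val).context [c] []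
                simpa using this
              exact hc.trans' hpl.2
  | nest hmt hd1 hd2 ih1 ih2 =>
      rename_i A' a B1 b B2 s1 s2
      cases B1 with
      | none =>
          cases A' <;> cases B2 <;> exact hmt.2.2.elim
      | some r1 =>
          cases B2 with
          | none => cases A' <;> exact hmt.2.2.elim
          | some r2 =>
              have hc : SynCongr L (a :: s1 ++ b :: s2)
                  (a :: r1.val ++ b :: r2.val) := by
                have h1 := (ih1.2 : SynCongr L s1 r1.val).context [a] (b :: s2)
                have h2 := (ih2.2 : SynCongr L s2 r2.val).context
                  (a :: r1.val ++ [b]) []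
                refine SynCongr.trans' (by simpa [List.append_assoc] using h1)
                  (by simpa [List.append_assoc] using h2)
              cases A' with
              | none => exact hc.mem_iff.mpr hmt.2.2
              | some r =>
                  exact ⟨.nest hmt.1 hmt.2.1 ih1.1 ih2.1, hc.trans' hmt.2.2⟩

lemma Gc_complete {L : Set (List α)} {R : Finset (List α)}
    (hR : ∀ s, WellMatched t s → ∃ r ∈ R, WellMatched t r ∧ SynCongr L s r) :
    ∀ {s}, WellMatched t s → ∀ (r : {x : List α // x ∈ R}), SynCongr L s r.val →
      (Gc t L R).Derives (some r) s := by
  intro s hs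
  induction hs with
  | nil =>
      intro r hr
      exact .eps (show SynCongr L [] r.val from hr)
  | plain hc hs' ih =>
      rename_i c s'
      intro r hr
      obtain ⟨r', hr'R, _, hcong⟩ := hR s' hs'
      have hd : (Gc t L R).Derives (some ⟨r', hr'R⟩) s' := ih ⟨r', hr'R⟩ hcong
      refine VPG.Derives.plain (L1 := some ⟨r', hr'R⟩) ⟨hc, ?_⟩ hd
      show SynCongr L (c :: r') r.val
      have h1 : SynCongr L (c :: r') (c :: s') := by
        have := hcong.symm'.context [c] []
        simpa using this
      exact h1.trans' hr
  | nest ha hb hs1 hs2 ih1 ih2 =>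
      rename_i a b s1 s2
      intro r hr
      obtain ⟨r1, hr1R, _, hcong1⟩ := hR s1 hs1
      obtain ⟨r2, hr2R, _, hcong2⟩ := hR s2 hs2
      have hd1 : (Gc t L R).Derives (some ⟨r1, hr1R⟩) s1 := ih1 ⟨r1, hr1R⟩ hcong1
      have hd2 : (Gc t L R).Derives (some ⟨r2, hr2R⟩) s2 := ih2 ⟨r2, hr2R⟩ hcong2
      refine VPG.Derives.nest (L1 := some ⟨r1, hr1R⟩) (L2 := some ⟨r2, hr2R⟩)
        ⟨ha, hb, ?_⟩ hd1 hd2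
      show SynCongr L (a :: r1 ++ b :: r2) r.val
      have h1 : SynCongr L (a :: r1 ++ b :: r2) (a :: s1 ++ b :: r2) := by
        have := hcong1.symm'.context [a] (b :: r2)
        simpa [List.append_assoc] using this
      have h2 : SynCongr L (a :: s1 ++ b :: r2) (a :: s1 ++ b :: s2) := by
        have := hcong2.symm'.context (a :: s1 ++ [b]) []
        simpa [List.append_assoc] using this
      exact (h1.trans' h2).trans' hr

lemma Gc_start {L : Set (List α)} {R : Finset (List α)}
    (hR : ∀ s, WellMatched t s → ∃ r ∈ R, WellMatched t r ∧ SynCongr L s r)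
    {w : List α} (hwmw : WellMatched t w) (hw : w ∈ L) :
    (Gc t L R).Derives none w := by
  cases hwmw with
  | nil => exact .eps hw
  | plain hc hs' =>
      rename_i c s'
      obtain ⟨r', hr'R, _, hcong⟩ := hR s' hs'
      have hd : (Gc t L R).Derives (some ⟨r', hr'R⟩) s' := Gc_complete hR hs' _ hcong
      refine VPG.Derives.plain (L1 := some ⟨r', hr'R⟩) ⟨hc, ?_⟩ hd
      show (c :: r') ∈ L
      have h1 : SynCongr L (c :: s') (c :: r') := by
        have := hcong.context [c] []
        simpa using this
      exact h1.mem_iff.mp hw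
  | nest ha hb hs1 hs2 =>
      rename_i a b s1 s2
      obtain ⟨r1, hr1R, _, hcong1⟩ := hR s1 hs1
      obtain ⟨r2, hr2R, _, hcong2⟩ := hR s2 hs2
      have hd1 : (Gc t L R).Derives (some ⟨r1, hr1R⟩) s1 := Gc_complete hR hs1 _ hcong1
      have hd2 : (Gc t L R).Derives (some ⟨r2, hr2R⟩) s2 := Gc_complete hR hs2 _ hcong2
      refine VPG.Derives.nest (L1 := some ⟨r1, hr1R⟩) (L2 := some ⟨r2, hr2R⟩)
        ⟨ha, hb, ?_⟩ hd1 hd2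
      show (a :: r1 ++ b :: r2) ∈ L
      have h1 : SynCongr L (a :: s1 ++ b :: s2) (a :: r1 ++ b :: s2) := by
        have := hcong1.context [a] (b :: s2)
        simpa [List.append_assoc] using this
      have h2 : SynCongr L (a :: r1 ++ b :: s2) (a :: r1 ++ b :: r2) := by
        have := hcong2.context (a :: r1 ++ [b]) []
        simpa [List.append_assoc] using this
      exact (h1.trans' h2).mem_iff.mp hw

lemma Gc_lang {L : Set (List α)} {R : Finset (List α)}
    (hwm : ∀ s ∈ L, WellMatched t s)
    (hR : ∀ s, WellMatched t s → ∃ r ∈ R, WellMatched t r ∧ SynCongr L s r) :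
    (Gc t L R).lang = L := by
  ext w
  constructor
  · intro h
    exact Gc_sound (A := none) h
  · intro h
    exact Gc_start hR (hwm w h) h

/-! ### Relabelling grammars -/

/-- Transporting a grammar along an equivalence of nonterminals. -/
def relabel {N M : Type} (G : VPG α N t) (e : N ≃ M) : VPG α M t where
  start := e G.start
  peps A := G.peps (e.symm A)
  pplain A c B := G.pplain (e.symm A) c (e.symm B)
  pmatch A a B1 b B2 := G.pmatch (e.symm A) a (e.symm B1) b (e.symm B2)
  plain_ok h := G.plain_ok h
  match_ok h := G.match_ok h

lemma relabel_derives {N M : Type} {G : VPG α N t} {e : N ≃ M} :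
    ∀ {A w}, (relabel G e).Derives A w → G.Derives (e.symm A) w := by
  intro A w h
  induction h with
  | eps he => exact .eps he
  | plain hp _ ih => exact .plain hp ih
  | nest hm _ _ ih1 ih2 => exact .nest hm ih1 ih2

lemma derives_relabel {N M : Type} {G : VPG α N t} {e : N ≃ M} :
    ∀ {B w}, G.Derives B w → (relabel G e).Derives (e B) w := by
  intro B w h
  induction h with
  | eps he => exact .eps (by simpa [relabel] using he)
  | plain hp _ ih => exact .plain (by simpa [relabel] using hp) ih
  | nest hm _ _ ih1 ih2 => exact .nest (by simpa [relabel] using hm) ih1 ih2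

lemma relabel_lang {N M : Type} (G : VPG α N t) (e : N ≃ M) :
    (relabel G e).lang = G.lang := by
  ext w
  constructor
  · intro h
    have := relabel_derives (G := G) (e := e) h
    rwa [show e.symm (relabel G e).start = G.start from Equiv.symm_apply_apply e _] at this
  · intro h
    exact derives_relabel (e := e) h

end VPLAux

open VStar in
/-- syntactic-congruence criterion: a language of well-matched
strings is a VPL iff its syntactic congruence on well-matched strings has
finitely many equivalence classes. -/
theorem vpl_iff_finite_syn_congr {α : Type} (t : α → Kind) (L : Set (List α))
    (hwm : ∀ s ∈ L, WellMatched t s) :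
    IsVPL t L ↔
      ∃ R : Finset (List α), ∀ s, WellMatched t s →
        ∃ r ∈ R, WellMatched t r ∧ SynCongr L s r := by
  constructor
  · rintro ⟨n, G, rfl⟩
    exact VPLAux.forward_dir G
  · rintro ⟨R, hR⟩
    have hlang := VPLAux.Gc_lang (t := t) (L := L) (R := R) hwm hR
    refine ⟨Fintype.card (Option {x : List α // x ∈ R}),
      VPLAux.relabel (VPLAux.Gc t L R) (Fintype.equivFin _), ?_⟩
    rw [VPLAux.relabel_lang, hlang]
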